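/- arXiv:1305.6635 — 2 statements merged into one kernel-verified Lean document; each statement's English description precedes it below -/
import Mathlib

section
/- Let G₂, G₂' be i.i.d. exponential with mean σ₂ > 0 and G₃, G₃' be i.i.d. exponential with mean σ₃ > 0, all four independent. Then for τ > 0 with τ ≠ σ₃, E[exp(-|G₃ - G₃' + G₂ - G₂'|/τ)] = τ(σ₂σ₃ + τ(σ₂ + σ₃)) / ((τ+σ₂)(τ+σ₃)(σ₂+σ₃)). -/
/-!
Write `m = 1/σ₂`, `p = 1/τ`, `q = 1/σ₃` for the rates. Everything reduces to the one-dimensional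
kernel `s ↦ E[exp(-p|G - s|)]`, `G ~ Exp(q)`, `s ≥ 0`, computed by splitting the integral at `s`.
Integrating the kernel once more against `Exp(q)` gives, for every shift `t`,
`E[exp(-p|G₃ - G₃' + t|)] = (q² e^{-p|t|} - pq e^{-q|t|}) / (q² - p²)`,
and the same computation gives `E[exp(-c|G₂ - G₂'|)] = m / (m + c)` for all `c ≥ 0`.
Conditioning on `(G₂, G₂')` and combining the two yields the formula.
-/

open MeasureTheory ProbabilityTheory Real Set

lemma integral_expMeasure_eq_integral_Ioi {r : ℝ} (hr : 0 < r) (g : ℝ → ℝ) :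
    ∫ x, g x ∂expMeasure r = ∫ x in Ioi 0, r * exp (-(r * x)) * g x := by
  rw [expMeasure, gammaMeasure, integral_withDensity_eq_integral_toReal_smul (f := gammaPDF 1 r)
    (by unfold gammaPDF; fun_prop) (.of_forall fun _ => ENNReal.ofReal_lt_top),
    ← integral_Ici_eq_integral_Ioi, ← integral_indicator measurableSet_Ici]
  congr 1 with x
  by_cases hx : 0 ≤ x <;> simp [gammaPDF_eq, hx, hr.le, (exp_pos _).le]

lemma ae_nonneg_expMeasure (r : ℝ) : ∀ᵐ x ∂expMeasure r, 0 ≤ x := by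
  rw [expMeasure, gammaMeasure, ae_withDensity_iff (by unfold gammaPDF; fun_prop)]
  refine .of_forall fun x hx => ?_
  by_contra! h
  exact hx (gammaPDF_of_neg h)

lemma integral_expMeasure_exp_neg_mul {r c : ℝ} (hr : 0 < r) (hrc : 0 < r + c) :
    ∫ x, exp (-(c * x)) ∂expMeasure r = r / (r + c) := by
  have h : ∀ x, r * exp (-(r * x)) * exp (-(c * x)) = r * exp (-(r + c) * x) := fun x => by
    rw [mul_assoc, ← exp_add]; ring_nf
  simp_rw [integral_expMeasure_eq_integral_Ioi hr, h, integral_const_mul,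
    integral_exp_mul_Ioi (neg_lt_zero.2 hrc), mul_zero, exp_zero]
  field_simp

lemma integral_expMeasure_mul_exp_neg_mul {r c : ℝ} (hr : 0 < r) (hrc : 0 < r + c) :
    ∫ x, x * exp (-(c * x)) ∂expMeasure r = r / (r + c) ^ 2 := by
  have h : EqOn (fun x => r * exp (-(r * x)) * (x * exp (-(c * x))))
      (fun x => r * (x ^ ((2 : ℝ) - 1) * exp (-((r + c) * x)))) (Ioi 0) := fun x _ => by
    have hexp : exp (-(r * x)) * exp (-(c * x)) = exp (-((r + c) * x)) := by
      rw [← exp_add]; ring_nf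
    simp only [show (2 : ℝ) - 1 = 1 by norm_num, rpow_one]
    linear_combination (r * x) * hexp
  rw [integral_expMeasure_eq_integral_Ioi hr, setIntegral_congr_fun measurableSet_Ioi h,
    integral_const_mul, integral_rpow_mul_exp_neg_mul_Ioi two_pos hrc, Gamma_two, rpow_two]
  field_simp

lemma integral_Ioi_exp_neg_mul_mul_exp_neg_mul_abs_sub {p q s : ℝ} (hpq : 0 < p + q)
    (hs : 0 ≤ s) :
    ∫ x in Ioi 0, exp (-(q * x)) * exp (-(p * |x - s|)) =
      exp (-(p * s)) * (∫ x in 0..s, exp ((p - q) * x)) + exp (-(q * s)) / (p + q) := by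
  have hnear : EqOn (fun x => exp (-(q * x)) * exp (-(p * |x - s|)))
      (fun x => exp (-(p * s)) * exp ((p - q) * x)) (Ioc 0 s) := fun x hx => by
    dsimp only
    rw [abs_of_nonpos (by linarith [hx.2]), ← exp_add, ← exp_add]; ring_nf
  have hfar : EqOn (fun x => exp (-(q * x)) * exp (-(p * |x - s|)))
      (fun x => exp (p * s) * exp (-(p + q) * x)) (Ioi s) := fun x hx => by
    dsimp only
    rw [abs_of_nonneg (by linarith [mem_Ioi.1 hx]), ← exp_add, ← exp_add]; ring_nf
  have hint : IntegrableOn (fun x => exp (p * s) * exp (-(p + q) * x)) (Ioi s) :=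
    (integrableOn_exp_mul_Ioi (neg_lt_zero.2 hpq) s).const_mul _
  rw [← Ioc_union_Ioi_eq_Ioi hs, setIntegral_union Ioc_disjoint_Ioi_same measurableSet_Ioi
      (Continuous.integrableOn_Ioc (by fun_prop)) (hint.congr_fun hfar.symm measurableSet_Ioi),
    setIntegral_congr_fun measurableSet_Ioc hnear, setIntegral_congr_fun measurableSet_Ioi hfar,
    integral_const_mul, integral_const_mul, intervalIntegral.integral_of_le hs,
    integral_exp_mul_Ioi (neg_lt_zero.2 hpq), neg_div_neg_eq, mul_div_assoc', ← exp_add]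
  ring_nf

lemma integral_expMeasure_exp_neg_mul_abs_sub {p q s : ℝ} (hq : 0 < q) (hpq : 0 < p + q)
    (hne : p ≠ q) (hs : 0 ≤ s) :
    ∫ x, exp (-(p * |x - s|)) ∂expMeasure q =
      q * ((exp (-(q * s)) - exp (-(p * s))) / (p - q) + exp (-(q * s)) / (p + q)) := by
  have hsub : p - q ≠ 0 := sub_ne_zero.2 hne
  have h : exp (-(p * s)) * exp ((p - q) * s) = exp (-(q * s)) := by rw [← exp_add]; ring_nf
  simp_rw [integral_expMeasure_eq_integral_Ioi hq, mul_assoc, integral_const_mul,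
    integral_Ioi_exp_neg_mul_mul_exp_neg_mul_abs_sub hpq hs,
    intervalIntegral.integral_comp_mul_left (fun x => exp x) hsub, integral_exp, mul_zero,
    exp_zero, smul_eq_mul]
  field_simp
  rw [mul_comm s]
  linear_combination (p + q) * h

lemma integral_expMeasure_exp_neg_mul_abs_sub_self {q s : ℝ} (hq : 0 < q) (hs : 0 ≤ s) :
    ∫ x, exp (-(q * |x - s|)) ∂expMeasure q = (q * s + 1 / 2) * exp (-(q * s)) := by
  simp_rw [integral_expMeasure_eq_integral_Ioi hq, mul_assoc, integral_const_mul,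
    integral_Ioi_exp_neg_mul_mul_exp_neg_mul_abs_sub (add_pos hq hq) hs, sub_self, zero_mul,
    exp_zero, intervalIntegral.integral_const, smul_eq_mul, mul_one, sub_zero]
  field_simp
  ring

lemma integrable_exp_neg_mul_abs {α : Type*} [MeasurableSpace α] {μ : Measure α}
    [IsFiniteMeasure μ] {c : ℝ} (hc : 0 ≤ c) {g : α → ℝ} (hg : Measurable g) :
    Integrable (fun x => exp (-(c * |g x|))) μ :=
  .of_bound (by fun_prop) 1 (.of_forall fun x => by
    rw [norm_of_nonneg (exp_pos _).le, exp_le_one_iff, neg_nonpos]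
    positivity)

lemma integral_expMeasure_prod_exp_neg_mul_abs_sub_add_of_nonneg {p q t : ℝ} (hp : 0 ≤ p)
    (hq : 0 < q) (hne : p ≠ q) (ht : 0 ≤ t) :
    ∫ z, exp (-(p * |z.1 - z.2 + t|)) ∂(expMeasure q).prod (expMeasure q) =
      (q ^ 2 * exp (-(p * t)) - p * q * exp (-(q * t))) / (q ^ 2 - p ^ 2) := by
  have := isProbabilityMeasure_expMeasure hq
  have hpq : 0 < p + q := by linarith
  have hsub : p - q ≠ 0 := sub_ne_zero.2 hne
  have hinner : ∀ᵐ w ∂expMeasure q, ∫ x, exp (-(p * |w - x + t|)) ∂expMeasure q =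
      q * exp (-(q * t)) * (1 / (p - q) + 1 / (p + q)) * exp (-(q * w)) +
        -(q * exp (-(p * t)) / (p - q)) * exp (-(p * w)) := by
    filter_upwards [ae_nonneg_expMeasure q] with w hw
    have habs : ∀ x, |w - x + t| = |x - (w + t)| := fun x => by rw [abs_sub_comm]; ring_nf
    simp_rw [habs]
    rw [integral_expMeasure_exp_neg_mul_abs_sub hq hpq hne (by linarith)]
    simp only [mul_add, neg_add, exp_add]
    field_simp
    ring
  have hexp : ∀ {c}, 0 < q + c → Integrable (fun x => exp (-(c * x))) (expMeasure q) :=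
    fun hc => .of_integral_ne_zero (by rw [integral_expMeasure_exp_neg_mul hq hc]; positivity)
  rw [integral_prod _ (integrable_exp_neg_mul_abs hp (by fun_prop)), integral_congr_ae hinner,
    integral_add ((hexp (by linarith)).const_mul _) ((hexp (by linarith)).const_mul _),
    integral_const_mul, integral_const_mul, integral_expMeasure_exp_neg_mul hq (by linarith),
    integral_expMeasure_exp_neg_mul hq (by linarith)]
  have hsq : q ^ 2 - p ^ 2 ≠ 0 := by
    rw [sq_sub_sq]; exact mul_ne_zero (by positivity) (sub_ne_zero.2 hne.symm)
  field_simp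
  ring

lemma integral_expMeasure_prod_exp_neg_mul_abs_sub_add {p q : ℝ} (hp : 0 ≤ p) (hq : 0 < q)
    (hne : p ≠ q) (t : ℝ) :
    ∫ z, exp (-(p * |z.1 - z.2 + t|)) ∂(expMeasure q).prod (expMeasure q) =
      (q ^ 2 * exp (-(p * |t|)) - p * q * exp (-(q * |t|))) / (q ^ 2 - p ^ 2) := by
  have := isProbabilityMeasure_expMeasure hq
  rcases le_total 0 t with ht | ht
  · rw [abs_of_nonneg ht]
    exact integral_expMeasure_prod_exp_neg_mul_abs_sub_add_of_nonneg hp hq hne ht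
  · rw [abs_of_nonpos ht,
      ← integral_expMeasure_prod_exp_neg_mul_abs_sub_add_of_nonneg hp hq hne (neg_nonneg.2 ht)]
    conv_rhs => rw [← integral_prod_swap]
    congr 1 with z
    rw [← abs_neg, Prod.fst_swap, Prod.snd_swap]
    ring_nf

lemma integral_expMeasure_prod_exp_neg_mul_abs_sub {m c : ℝ} (hm : 0 < m) (hc : 0 ≤ c) :
    ∫ z, exp (-(c * |z.1 - z.2|)) ∂(expMeasure m).prod (expMeasure m) = m / (m + c) := by
  rcases eq_or_ne c m with rfl | hne
  · have := isProbabilityMeasure_expMeasure hm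
    have hinner : ∀ᵐ u ∂expMeasure c, ∫ v, exp (-(c * |u - v|)) ∂expMeasure c =
        c * (u * exp (-(c * u))) + 1 / 2 * exp (-(c * u)) := by
      filter_upwards [ae_nonneg_expMeasure c] with u hu
      simp_rw [abs_sub_comm u, integral_expMeasure_exp_neg_mul_abs_sub_self hm hu]
      ring
    have hcc : 0 < c + c := by linarith
    rw [integral_prod _ (integrable_exp_neg_mul_abs hc (by fun_prop)), integral_congr_ae hinner,
      integral_add
        ((Integrable.of_integral_ne_zero (by
          rw [integral_expMeasure_mul_exp_neg_mul hm hcc]; positivity)).const_mul _)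
        ((Integrable.of_integral_ne_zero (by
          rw [integral_expMeasure_exp_neg_mul hm hcc]; positivity)).const_mul _),
      integral_const_mul, integral_const_mul, integral_expMeasure_mul_exp_neg_mul hm hcc,
      integral_expMeasure_exp_neg_mul hm hcc]
    field_simp
    ring
  · have h := integral_expMeasure_prod_exp_neg_mul_abs_sub_add hc hm hne 0
    simp only [add_zero, abs_zero, mul_zero, neg_zero, exp_zero, mul_one] at h
    have hsub : m - c ≠ 0 := sub_ne_zero.2 hne.symm
    rw [h, sq_sub_sq]
    field_simp

lemma integral_integral_expMeasure_prod_exp_neg_mul_abs_add {m p q : ℝ} (hm : 0 < m) (hp : 0 ≤ p)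
    (hq : 0 < q) (hne : p ≠ q) :
    ∫ a, ∫ b, exp (-(p * |b.1 - b.2 + (a.1 - a.2)|)) ∂(expMeasure q).prod (expMeasure q)
        ∂(expMeasure m).prod (expMeasure m) =
      (q ^ 2 * (m / (m + p)) - p * q * (m / (m + q))) / (q ^ 2 - p ^ 2) := by
  have := isProbabilityMeasure_expMeasure hm
  simp_rw [integral_expMeasure_prod_exp_neg_mul_abs_sub_add hp hq hne]
  rw [integral_div, integral_sub ((integrable_exp_neg_mul_abs hp (by fun_prop)).const_mul _)
      ((integrable_exp_neg_mul_abs hq.le (by fun_prop)).const_mul _),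
    integral_const_mul, integral_const_mul, integral_expMeasure_prod_exp_neg_mul_abs_sub hm hp,
    integral_expMeasure_prod_exp_neg_mul_abs_sub hm hq.le]

namespace ProbabilityTheory

lemma HasLaw.of_map_eq {Ω 𝓧 : Type*} [MeasurableSpace Ω] [MeasurableSpace 𝓧] {P : Measure Ω}
    {X : Ω → 𝓧} {μ : Measure 𝓧} [NeZero μ] (h : P.map X = μ) : HasLaw X μ P :=
  ⟨aemeasurable_of_map_neZero (h ▸ inferInstance), h⟩

lemma iIndepFun.hasLaw_prodMk_prodMk {Ω 𝓧 : Type*} [MeasurableSpace Ω] [MeasurableSpace 𝓧]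
    {P : Measure Ω} [IsFiniteMeasure P] {X₁ X₂ X₃ X₄ : Ω → 𝓧} {μ₁ μ₂ μ₃ μ₄ : Measure 𝓧}
    [SFinite μ₂] [SFinite μ₄]
    (h : iIndepFun (m := fun _ : Fin 4 => (inferInstance : MeasurableSpace 𝓧)) ![X₁, X₂, X₃, X₄] P)
    (h₁ : HasLaw X₁ μ₁ P) (h₂ : HasLaw X₂ μ₂ P) (h₃ : HasLaw X₃ μ₃ P) (h₄ : HasLaw X₄ μ₄ P) :
    HasLaw (fun ω => ((X₁ ω, X₂ ω), (X₃ ω, X₄ ω))) ((μ₁.prod μ₂).prod (μ₃.prod μ₄)) P := by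
  have h₁₂ := (indepFun_iff_hasLaw_prodMk_prod h₁ h₂).1 (h.indepFun (i := 0) (j := 1) (by decide))
  have h₃₄ := (indepFun_iff_hasLaw_prodMk_prod h₃ h₄).1 (h.indepFun (i := 2) (j := 3) (by decide))
  refine (indepFun_iff_hasLaw_prodMk_prod h₁₂ h₃₄).1
    (h.indepFun_prodMk_prodMk₀ (fun i => ?_) 0 1 2 3 (by decide) (by decide) (by decide)
      (by decide))
  fin_cases i
  exacts [h₁.aemeasurable, h₂.aemeasurable, h₃.aemeasurable, h₄.aemeasurable]

end ProbabilityTheory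

/-- For `G₂, G₂'` i.i.d. exponential with mean `σ₂`, `G₃, G₃'` i.i.d. exponential with mean `σ₃`,
all four independent, and `τ > 0` with `τ ≠ σ₃`,
`E[exp(-|G₃-G₃'+G₂-G₂'|/τ)] = τ(σ₂σ₃ + τ(σ₂+σ₃)) / ((τ+σ₂)(τ+σ₃)(σ₂+σ₃))`. -/
theorem exp_delay_sum_transform {Ω : Type*} [MeasurableSpace Ω] (P : Measure Ω)
    [IsProbabilityMeasure P]
    (G₂ G₂' G₃ G₃' : Ω → ℝ) (σ₂ σ₃ τ : ℝ) (hσ₂ : 0 < σ₂) (hσ₃ : 0 < σ₃) (hτ : 0 < τ)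
    (hne : τ ≠ σ₃)
    (hG₂ : Measure.map G₂ P = expMeasure σ₂⁻¹)
    (hG₂' : Measure.map G₂' P = expMeasure σ₂⁻¹)
    (hG₃ : Measure.map G₃ P = expMeasure σ₃⁻¹)
    (hG₃' : Measure.map G₃' P = expMeasure σ₃⁻¹)
    (hindep : iIndepFun (m := fun _ : Fin 4 => (inferInstance : MeasurableSpace ℝ))
      ![G₂, G₂', G₃, G₃'] P) :
    ∫ ω, exp (-|G₃ ω - G₃' ω + G₂ ω - G₂' ω| / τ) ∂P =
      τ * (σ₂ * σ₃ + τ * (σ₂ + σ₃)) / ((τ + σ₂) * (τ + σ₃) * (σ₂ + σ₃)) := by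
  have hm : 0 < σ₂⁻¹ := inv_pos.2 hσ₂
  have hq : 0 < σ₃⁻¹ := inv_pos.2 hσ₃
  have hp : 0 < τ⁻¹ := inv_pos.2 hτ
  have := isProbabilityMeasure_expMeasure hm
  have := isProbabilityMeasure_expMeasure hq
  have hlaw := hindep.hasLaw_prodMk_prodMk (.of_map_eq hG₂) (.of_map_eq hG₂') (.of_map_eq hG₃)
    (.of_map_eq hG₃')
  have hsq : τ ^ 2 - σ₃ ^ 2 ≠ 0 := by
    rw [sq_sub_sq]; exact mul_ne_zero (by positivity) (sub_ne_zero.2 hne)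
  calc ∫ ω, exp (-|G₃ ω - G₃' ω + G₂ ω - G₂' ω| / τ) ∂P
      = ∫ a, ∫ b, exp (-(τ⁻¹ * |b.1 - b.2 + (a.1 - a.2)|))
          ∂(expMeasure σ₃⁻¹).prod (expMeasure σ₃⁻¹) ∂(expMeasure σ₂⁻¹).prod (expMeasure σ₂⁻¹) := by
        rw [← integral_prod (fun z : (ℝ × ℝ) × (ℝ × ℝ) =>
            exp (-(τ⁻¹ * |z.2.1 - z.2.2 + (z.1.1 - z.1.2)|)))
            (integrable_exp_neg_mul_abs hp.le (by fun_prop)),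
          ← hlaw.integral_comp (by fun_prop)]
        congr 1 with ω
        simp only [Function.comp_apply]
        ring_nf
    _ = (σ₃⁻¹ ^ 2 * (σ₂⁻¹ / (σ₂⁻¹ + τ⁻¹)) - τ⁻¹ * σ₃⁻¹ * (σ₂⁻¹ / (σ₂⁻¹ + σ₃⁻¹)))
          / (σ₃⁻¹ ^ 2 - τ⁻¹ ^ 2) :=
        integral_integral_expMeasure_prod_exp_neg_mul_abs_add hm hp.le hq (inv_injective.ne hne)
    _ = τ * (σ₂ * σ₃ + τ * (σ₂ + σ₃)) / ((τ + σ₂) * (τ + σ₃) * (σ₂ + σ₃)) := by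
        field_simp
        ring
end

section
/- Let σ, τ > 0 with σ ≠ τ, and let T, T' be i.i.d. Exp(1/σ) random variables. Then E[exp(-|T - T'|/τ)] = τ/(σ + τ), and more generally for a constant c ≥ 0, E[exp(-|c + T - T'|/τ)] = (τ/(τ+σ))·(τ·e^{-c/τ} - σ·e^{-c/σ})/(τ - σ). -/
open MeasureTheory ProbabilityTheory Real Set

/-!
Work with the rates `r = σ⁻¹` and `b = τ⁻¹`. For `m ≥ 0` and `Y ~ Exp(r)`, splitting the
integral at `y = m` shows that `E[exp(-b|m - Y|)]` is a combination of `exp(-r m)` and `exp(-b m)`.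
By independence one may condition on `T` and put `m = c + T`; the Laplace transform
`E[exp(-k T)] = r / (r + k)` then evaluates the outer expectation.
-/

lemma integral_exp_mul {k : ℝ} (hk : k ≠ 0) (a b : ℝ) :
    ∫ x in a..b, exp (k * x) = (exp (k * b) - exp (k * a)) / k := by
  rw [intervalIntegral.integral_comp_mul_left exp hk, integral_exp, smul_eq_mul, inv_mul_eq_div]

namespace ProbabilityTheory

lemma IndepFun.integral_comp_eq_integral_prod {Ω α β E : Type*} [MeasurableSpace Ω]
    [MeasurableSpace α] [MeasurableSpace β] [NormedAddCommGroup E] [NormedSpace ℝ E]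
    {P : Measure Ω} [IsFiniteMeasure P] {X : Ω → α} {Y : Ω → β} (hXY : IndepFun X Y P)
    (hX : AEMeasurable X P) (hY : AEMeasurable Y P) {f : α × β → E}
    (hf : AEStronglyMeasurable f ((P.map X).prod (P.map Y))) :
    ∫ ω, f (X ω, Y ω) ∂P = ∫ p, f p ∂(P.map X).prod (P.map Y) := by
  rw [← hXY.map_prod_eq_prod_map_map hX hY] at hf ⊢
  exact (integral_map (hX.prodMk hY) hf).symm

lemma measurable_gammaPDF (a r : ℝ) : Measurable (gammaPDF a r) :=
  (measurable_gammaPDFReal a r).ennreal_ofReal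

lemma integral_expMeasure_eq_setIntegral {r : ℝ} (hr : 0 < r) (g : ℝ → ℝ) :
    ∫ x, g x ∂expMeasure r = ∫ x in Ioi 0, g x * (r * exp (-(r * x))) := by
  rw [expMeasure, gammaMeasure, integral_withDensity_eq_integral_toReal_smul
    (measurable_gammaPDF 1 r) (by simp [gammaPDF]), ← integral_Ici_eq_integral_Ioi,
    ← integral_indicator measurableSet_Ici]
  congr 1 with x
  by_cases hx : 0 ≤ x
  · simp [gammaPDF_of_nonneg hx, hx, mul_comm, (by positivity : 0 ≤ r * exp (-(r * x)))]
  · simp [gammaPDF_of_neg (not_le.mp hx), hx]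

lemma ae_nonneg_expMeasure (r : ℝ) : ∀ᵐ x ∂expMeasure r, 0 ≤ x := by
  rw [expMeasure, gammaMeasure, ae_withDensity_iff (measurable_gammaPDF 1 r)]
  refine Filter.Eventually.of_forall fun x hx => ?_
  by_contra! h
  exact hx (gammaPDF_of_neg h)

lemma integrable_exp_neg_mul_expMeasure {r k : ℝ} (hr : 0 < r) (hk : 0 ≤ k) :
    Integrable (fun x => exp (-(k * x))) (expMeasure r) := by
  have := isProbabilityMeasure_expMeasure hr
  refine (integrable_const (1 : ℝ)).mono' (by fun_prop) ?_
  filter_upwards [ae_nonneg_expMeasure r] with x hx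
  rw [norm_of_nonneg (exp_nonneg _), exp_le_one_iff, neg_nonpos]
  positivity

lemma integral_exp_neg_mul_expMeasure {r k : ℝ} (hr : 0 < r) (hk : 0 < r + k) :
    ∫ x, exp (-(k * x)) ∂expMeasure r = r / (r + k) := by
  have hexp (x : ℝ) : exp (-(k * x)) * (r * exp (-(r * x))) = r * exp (-(r + k) * x) := by
    rw [mul_left_comm, ← exp_add]; ring_nf
  simp_rw [integral_expMeasure_eq_setIntegral hr, hexp, integral_const_mul,
    integral_exp_mul_Ioi (neg_lt_zero.mpr hk)]
  field_simp
  simp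

lemma integral_exp_neg_mul_abs_sub_expMeasure {r b m : ℝ} (hr : 0 < r) (hb : 0 < b)
    (hrb : r ≠ b) (hm : 0 ≤ m) :
    ∫ y, exp (-(b * |m - y|)) ∂expMeasure r
      = r * (exp (-(r * m)) - exp (-(b * m))) / (b - r) + r * exp (-(r * m)) / (r + b) := by
  set f := fun y => exp (-(b * |m - y|)) * (r * exp (-(r * y)))
  have hbr : b - r ≠ 0 := sub_ne_zero.mpr hrb.symm
  have hbelow : EqOn f (fun y => r * exp (-(b * m)) * exp ((b - r) * y)) (Ioc 0 m) := by
    intro y hy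
    simp only [f, abs_of_nonneg (sub_nonneg.mpr hy.2), mul_left_comm _ r, mul_assoc, ← exp_add]
    ring_nf
  have habove : EqOn f (fun y => r * exp (b * m) * exp (-(r + b) * y)) (Ioi m) := by
    intro y hy
    simp only [f, abs_of_neg (sub_neg.mpr (mem_Ioi.mp hy)), mul_left_comm _ r, mul_assoc,
      ← exp_add]
    ring_nf
  have hrb' : -(r + b) < 0 := by linarith
  have hint_above : IntegrableOn f (Ioi m) :=
    IntegrableOn.congr_fun ((integrableOn_exp_mul_Ioi hrb' m).const_mul _) habove.symm
      measurableSet_Ioi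
  rw [integral_expMeasure_eq_setIntegral hr, ← Ioc_union_Ioi_eq_Ioi hm,
    setIntegral_union (Ioc_disjoint_Ioi le_rfl) measurableSet_Ioi
      (Continuous.integrableOn_Ioc (by fun_prop)) hint_above,
    setIntegral_congr_fun measurableSet_Ioc hbelow, setIntegral_congr_fun measurableSet_Ioi habove,
    integral_const_mul, integral_const_mul, ← intervalIntegral.integral_of_le hm,
    integral_exp_mul hbr, integral_exp_mul_Ioi hrb']
  have h1 : exp (-(b * m)) * exp ((b - r) * m) = exp (-(r * m)) := by rw [← exp_add]; ring_nf
  have h2 : exp (b * m) * exp (-(r + b) * m) = exp (-(r * m)) := by rw [← exp_add]; ring_nf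
  rw [mul_zero, exp_zero, neg_div_neg_eq]
  linear_combination r / (b - r) * h1 + r / (r + b) * h2

lemma integral_exp_neg_mul_abs_add_sub_expMeasure_prod {r b c : ℝ} (hr : 0 < r) (hb : 0 < b)
    (hrb : r ≠ b) (hc : 0 ≤ c) :
    ∫ p, exp (-(b * |c + p.1 - p.2|)) ∂(expMeasure r).prod (expMeasure r)
      = r * (b * exp (-(r * c)) - r * exp (-(b * c))) / ((b - r) * (b + r)) := by
  have := isProbabilityMeasure_expMeasure hr
  have hbound : Integrable (fun p : ℝ × ℝ => exp (-(b * |c + p.1 - p.2|)))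
      ((expMeasure r).prod (expMeasure r)) := by
    refine (integrable_const (1 : ℝ)).mono' (by fun_prop)
      (Filter.Eventually.of_forall fun p => ?_)
    rw [norm_of_nonneg (exp_nonneg _), exp_le_one_iff, neg_nonpos]
    positivity
  have hinner : (fun x => ∫ y, exp (-(b * |c + x - y|)) ∂expMeasure r) =ᵐ[expMeasure r]
      fun x => (r / (b - r) + r / (r + b)) * exp (-(r * c)) * exp (-(r * x))
        - r / (b - r) * exp (-(b * c)) * exp (-(b * x)) := by
    filter_upwards [ae_nonneg_expMeasure r] with x hx
    rw [integral_exp_neg_mul_abs_sub_expMeasure hr hb hrb (by positivity)]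
    simp only [mul_add, neg_add, exp_add]
    ring
  rw [integral_prod _ hbound, integral_congr_ae hinner,
    integral_sub ((integrable_exp_neg_mul_expMeasure hr hr.le).const_mul _)
      ((integrable_exp_neg_mul_expMeasure hr hb.le).const_mul _),
    integral_const_mul, integral_const_mul, integral_exp_neg_mul_expMeasure hr (by positivity),
    integral_exp_neg_mul_expMeasure hr (by positivity)]
  have hbr : b - r ≠ 0 := sub_ne_zero.mpr hrb.symm
  field_simp
  ring

end ProbabilityTheory

/-- For `T, T'` i.i.d. exponential with mean `σ` and `τ > 0`, `τ ≠ σ`: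
`E[exp(-|T-T'|/τ)] = τ/(σ+τ)`, and for any constant `c ≥ 0`,
`E[exp(-|c+T-T'|/τ)] = (τ/(τ+σ)) (τ e^{-c/τ} - σ e^{-c/σ})/(τ-σ)`. -/
theorem exp_pair_laplace {Ω : Type*} [MeasurableSpace Ω] (P : Measure Ω)
    [IsProbabilityMeasure P]
    (T T' : Ω → ℝ) (σ τ : ℝ) (hσ : 0 < σ) (hτ : 0 < τ) (hne : σ ≠ τ)
    (hT : Measure.map T P = expMeasure σ⁻¹)
    (hT' : Measure.map T' P = expMeasure σ⁻¹)
    (hmeas : Measurable T) (hmeas' : Measurable T')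
    (hindep : IndepFun T T' P)
    (c : ℝ) (hc : 0 ≤ c) :
    (∫ ω, exp (-|T ω - T' ω| / τ) ∂P) = τ / (σ + τ) ∧
    (∫ ω, exp (-|c + T ω - T' ω| / τ) ∂P) =
      τ / (τ + σ) * ((τ * exp (-c / τ) - σ * exp (-c / σ)) / (τ - σ)) := by
  have hrates : σ⁻¹ ≠ τ⁻¹ := inv_injective.ne hne
  have hsub : τ - σ ≠ 0 := sub_ne_zero.mpr hne.symm
  have hpair (d : ℝ) (hd : 0 ≤ d) : ∫ ω, exp (-|d + T ω - T' ω| / τ) ∂P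
      = τ / (τ + σ) * ((τ * exp (-d / τ) - σ * exp (-d / σ)) / (τ - σ)) := by
    have hf : Continuous fun p : ℝ × ℝ => exp (-(τ⁻¹ * |d + p.1 - p.2|)) := by fun_prop
    simp_rw [neg_div, div_eq_inv_mul]
    rw [hindep.integral_comp_eq_integral_prod hmeas.aemeasurable hmeas'.aemeasurable
        hf.aestronglyMeasurable, hT, hT',
      integral_exp_neg_mul_abs_add_sub_expMeasure_prod (inv_pos.mpr hσ) (inv_pos.mpr hτ)
        hrates hd]
    field_simp
    ring
  refine ⟨?_, hpair c hc⟩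
  simpa [hsub, add_comm τ σ] using hpair 0 le_rfl
end
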